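/- With c₀ and c₁ defined recursively on the vertices of the blow-up tree as above, for any two adjacent vertices i, j of the dual graph the determinant c₀,ᵢ·c₁,ⱼ − c₁,ᵢ·c₀,ⱼ is nonzero; moreover it is negative exactly when the geodesic in the tree from the root vertex 0 to i passes through j. -/
import Mathlib

/-- Invariant: `p` is a parent function toward the root 0, `d` a depth function. -/
def BlowInv (c0 c1 : ℕ → ℕ) (G : SimpleGraph ℕ) (n : ℕ) (p d : ℕ → ℕ) : Prop :=
  (∀ a b, G.Adj a b → a ≤ n ∧ b ≤ n) ∧
  p 0 = 0 ∧
  (∀ a, a ≤ n → p a ≤ n) ∧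
  (∀ a, a ≤ n → a ≠ 0 → G.Adj a (p a)) ∧
  (∀ a b, G.Adj a b → b = p a ∨ a = p b) ∧
  (∀ a, a ≤ n → a ≠ 0 → d (p a) < d a) ∧
  (∀ a, a ≤ n → a ≠ 0 →
    (c0 a : ℤ) * (c1 (p a) : ℤ) - (c1 a : ℤ) * (c0 (p a) : ℤ) < 0) ∧
  (∀ a, a ≤ n → 1 ≤ c0 a)

lemma smooth_step (c0 c1 : ℕ → ℕ) (Gn Gm : SimpleGraph ℕ) (n j : ℕ) (p d : ℕ → ℕ)
    (H : BlowInv c0 c1 Gn n p d) (hj : j ≤ n)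
    (hc0 : c0 (n+1) = c0 j) (hc1 : c1 (n+1) = c1 j + 1)
    (hG : ∀ a b, Gm.Adj a b ↔
      Gn.Adj a b ∨ (a = n+1 ∧ b = j) ∨ (a = j ∧ b = n+1)) :
    ∃ p' d', BlowInv c0 c1 Gm (n+1) p' d' := by
  obtain ⟨A1, A2, A3, A4, A5, A6, A7, A8⟩ := H
  have hjn : j ≠ n+1 := by omega
  refine ⟨fun a => if a = n+1 then j else p a,
          fun a => if a = n+1 then d j + 1 else d a, ?_, ?_, ?_, ?_, ?_, ?_, ?_, ?_⟩
  · intro a b hab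
    rw [hG] at hab
    rcases hab with h | ⟨rfl, rfl⟩ | ⟨rfl, rfl⟩
    · have := A1 a b h; omega
    · omega
    · omega
  · have h0 : (0:ℕ) ≠ n+1 := by omega
    simp [h0, A2]
  · intro a ha
    by_cases h : a = n+1
    · simp [h, if_true, if_pos rfl]; omega
    · simp [if_neg h]
      have : a ≤ n := by omega
      have := A3 a this; omega
  · intro a ha ha0
    by_cases h : a = n+1
    · subst h
      simp [if_pos rfl]
      rw [hG]; right; left; exact ⟨rfl, rfl⟩
    · have han : a ≤ n := by omega
      simp [if_neg h]
      rw [hG]; left; exact A4 a han ha0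
  · intro a b hab
    rw [hG] at hab
    rcases hab with h | ⟨rfl, rfl⟩ | ⟨rfl, rfl⟩
    · have hb := A1 a b h
      have h1 : a ≠ n+1 := by omega
      have h2 : b ≠ n+1 := by omega
      rcases A5 a b h with h3 | h3
      · left; simp [if_neg h1]; exact h3
      · right; simp [if_neg h2]; exact h3
    · left; simp [if_pos rfl]
    · right; simp [if_pos rfl]
  · intro a ha ha0
    by_cases h : a = n+1
    · subst h
      simp [if_pos rfl, if_neg hjn]
    · have han : a ≤ n := by omega
      have hpa : p a ≤ n := A3 a han
      have h2 : p a ≠ n+1 := by omega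
      simp [if_neg h, if_neg h2]
      exact A6 a han ha0
  · intro a ha ha0
    by_cases h : a = n+1
    · subst h
      simp [if_pos rfl, if_neg hjn]
      rw [hc0, hc1]
      have h8 := A8 j hj
      have h8' : (1:ℤ) ≤ (c0 j : ℤ) := by exact_mod_cast h8
      push_cast
      nlinarith
    · have han : a ≤ n := by omega
      have hpa : p a ≤ n := A3 a han
      have h2 : p a ≠ n+1 := by omega
      simp [if_neg h, if_neg h2]
      have := A7 a han ha0; linarith
  · intro a ha
    by_cases h : a = n+1
    · subst h; rw [hc0]; exact A8 j hj
    · exact A8 a (by omega)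

lemma corner_step (c0 c1 : ℕ → ℕ) (Gn Gm : SimpleGraph ℕ) (n j k : ℕ) (p d : ℕ → ℕ)
    (H : BlowInv c0 c1 Gn n p d)
    (hj : j ≤ n) (hk : k ≤ n) (hadj : Gn.Adj j k) (hpk : j = p k)
    (hc0 : c0 (n+1) = c0 j + c0 k) (hc1 : c1 (n+1) = c1 j + c1 k)
    (hG : ∀ a b, Gm.Adj a b ↔
      (Gn.Adj a b ∧ ¬(a = j ∧ b = k) ∧ ¬(a = k ∧ b = j)) ∨
      (a = n+1 ∧ (b = j ∨ b = k)) ∨ ((a = j ∨ a = k) ∧ b = n+1)) :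
    ∃ p' d', BlowInv c0 c1 Gm (n+1) p' d' := by
  obtain ⟨A1, A2, A3, A4, A5, A6, A7, A8⟩ := H
  have hjk : j ≠ k := hadj.ne
  have hjn : j ≠ n+1 := by omega
  have hkn : k ≠ n+1 := by omega
  have hk0 : k ≠ 0 := by
    intro h; apply hjk; rw [h] at hpk; rw [hpk, A2, h]
  have hdetk : (c0 k : ℤ) * (c1 j : ℤ) - (c1 k : ℤ) * (c0 j : ℤ) < 0 := by
    have := A7 k hk hk0; rwa [← hpk] at this
  have hdp : ¬(j ≠ 0 ∧ p j = k) := by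
    rintro ⟨hj0, hpj⟩
    have h1 := A7 j hj hj0
    rw [hpj] at h1
    nlinarith
  refine ⟨fun a => if a = n+1 then j else if a = k then n+1 else p a,
          fun a => if a = n+1 then 2 * d j + 1 else 2 * d a, ?_, ?_, ?_, ?_, ?_, ?_, ?_, ?_⟩
  · intro a b hab
    rw [hG] at hab
    rcases hab with ⟨h, _, _⟩ | ⟨rfl, hb⟩ | ⟨ha, rfl⟩
    · have := A1 a b h; omega
    · rcases hb with rfl | rfl <;> omega
    · rcases ha with rfl | rfl <;> omega
  · have h0 : (0:ℕ) ≠ n+1 := by omega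
    simp [if_neg h0, if_neg (Ne.symm hk0), A2]
  · intro a ha
    by_cases h : a = n+1
    · simp [if_pos h]; omega
    · by_cases h2 : a = k
      · simp [if_neg h, if_pos h2, if_neg hkn]
      · simp [if_neg h, if_neg h2]
        have : a ≤ n := by omega
        have := A3 a this; omega
  · intro a ha ha0
    by_cases h : a = n+1
    · subst h
      simp [if_pos rfl]
      rw [hG]; right; left; exact ⟨rfl, Or.inl rfl⟩
    · by_cases h2 : a = k
      · subst h2
        simp [if_neg h, if_pos rfl]
        rw [hG]; right; right; exact ⟨Or.inr rfl, rfl⟩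
      · have han : a ≤ n := by omega
        simp [if_neg h, if_neg h2]
        rw [hG]; left
        refine ⟨A4 a han ha0, ?_, ?_⟩
        · rintro ⟨rfl, hpak⟩
          exact hdp ⟨ha0, hpak⟩
        · rintro ⟨rfl, _⟩; exact h2 rfl
  · intro a b hab
    rw [hG] at hab
    rcases hab with ⟨h, hn1, hn2⟩ | ⟨rfl, hb⟩ | ⟨ha, rfl⟩
    · have hb' := A1 a b h
      have h1 : a ≠ n+1 := by omega
      have h2 : b ≠ n+1 := by omega
      rcases A5 a b h with h3 | h3
      · left
        have hak : a ≠ k := by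
          intro hak; exact hn2 ⟨hak, by rw [h3, hak, ← hpk]⟩
        simp [if_neg h1, if_neg hak]; exact h3
      · right
        have hbk : b ≠ k := by
          intro hbk; exact hn1 ⟨by rw [h3, hbk, ← hpk], hbk⟩
        simp [if_neg h2, if_neg hbk]; exact h3
    · rcases hb with rfl | rfl
      · left; simp [if_pos rfl]
      · right; simp [if_pos rfl, if_neg hkn]
    · rcases ha with rfl | rfl
      · right; simp [if_pos rfl]
      · left; simp [if_pos rfl, if_neg hkn]
  · intro a ha ha0
    by_cases h : a = n+1
    · subst h
      simp [if_pos rfl, if_neg hjn]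
    · by_cases h2 : a = k
      · subst h2
        simp [if_neg h, if_pos rfl]
        have hd := A6 a hk hk0
        rw [← hpk] at hd
        omega
      · have han : a ≤ n := by omega
        have hpa : p a ≤ n := A3 a han
        have h3 : p a ≠ n+1 := by omega
        simp [if_neg h, if_neg h2, if_neg h3]
        have := A6 a han ha0; omega
  · intro a ha ha0
    by_cases h : a = n+1
    · subst h
      simp [if_pos rfl]
      rw [hc0, hc1]
      push_cast
      nlinarith
    · by_cases h2 : a = k
      · subst h2
        simp [if_neg h, if_pos rfl]
        rw [hc0, hc1]
        push_cast
        nlinarith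
      · have han : a ≤ n := by omega
        simp [if_neg h, if_neg h2]
        have := A7 a han ha0; linarith
  · intro a ha
    by_cases h : a = n+1
    · subst h; rw [hc0]
      have := A8 j hj; omega
    · exact A8 a (by omega)

/-- Every walk from `a ≠ 0` to `0` passes through the parent of `a`. -/
lemma walk_mem_parent (G : SimpleGraph ℕ) (p : ℕ → ℕ)
    (A2 : p 0 = 0)
    (A5 : ∀ a b, G.Adj a b → b = p a ∨ a = p b) :
    ∀ L a (W : G.Walk a 0), W.length ≤ L → a ≠ 0 → p a ∈ W.support := by
  intro L
  induction L with
  | zero =>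
    intro a W hW ha
    cases W with
    | nil => exact absurd rfl ha
    | cons h q => simp [SimpleGraph.Walk.length_cons] at hW
  | succ L ih =>
    intro a W hW ha
    cases W with
    | nil => exact absurd rfl ha
    | @cons _ x _ h q =>
      by_cases hx : x = p a
      · rw [SimpleGraph.Walk.support_cons]
        right
        rw [← hx]
        exact q.start_mem_support
      · rcases A5 a x h with h1 | h1
        · exact absurd h1 hx
        · have hx0 : x ≠ 0 := by
            intro h0; rw [h0, A2] at h1; exact ha h1
          have hqL : q.length ≤ L := by
            rw [SimpleGraph.Walk.length_cons] at hW; omega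
          have haq : a ∈ q.support := by
            have := ih x q hqL hx0; rwa [← h1] at this
          have hq' := ih a (q.dropUntil a haq)
            (le_trans (q.length_dropUntil_le haq) hqL) ha
          rw [SimpleGraph.Walk.support_cons]
          right
          exact q.support_dropUntil_subset haq hq'

/-- There is a walk from `a` to `0` supported on the parent chain of `a`. -/
lemma walk_chain (G : SimpleGraph ℕ) (p d : ℕ → ℕ) (s : ℕ)
    (A3 : ∀ a, a ≤ s → p a ≤ s)
    (A4 : ∀ a, a ≤ s → a ≠ 0 → G.Adj a (p a))
    (A6 : ∀ a, a ≤ s → a ≠ 0 → d (p a) < d a) :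
    ∀ N a, a ≤ s → d a ≤ N → ∃ W : G.Walk a 0, ∀ y ∈ W.support, ∃ m, p^[m] a = y := by
  intro N
  induction N with
  | zero =>
    intro a ha hd
    by_cases h0 : a = 0
    · subst h0
      exact ⟨SimpleGraph.Walk.nil, by
        intro y hy
        simp [SimpleGraph.Walk.support_nil] at hy
        exact ⟨0, by simp [hy]⟩⟩
    · have := A6 a ha h0; omega
  | succ N ih =>
    intro a ha hd
    by_cases h0 : a = 0
    · subst h0
      exact ⟨SimpleGraph.Walk.nil, by
        intro y hy
        simp [SimpleGraph.Walk.support_nil] at hy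
        exact ⟨0, by simp [hy]⟩⟩
    · have hlt := A6 a ha h0
      obtain ⟨W', hW'⟩ := ih (p a) (A3 a ha) (by omega)
      refine ⟨SimpleGraph.Walk.cons (A4 a ha h0) W', ?_⟩
      intro y hy
      rw [SimpleGraph.Walk.support_cons] at hy
      rcases List.mem_cons.1 hy with rfl | hy
      · exact ⟨0, rfl⟩
      · obtain ⟨m, hm⟩ := hW' y hy
        exact ⟨m + 1, by rw [Function.iterate_succ_apply]; exact hm⟩

/-- No cycles in the parent chain. -/
lemma no_cycle (p d : ℕ → ℕ) (s : ℕ)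
    (A2 : p 0 = 0)
    (A3 : ∀ a, a ≤ s → p a ≤ s)
    (A6 : ∀ a, a ≤ s → a ≠ 0 → d (p a) < d a) :
    ∀ a, a ≤ s → a ≠ 0 → ∀ t, p^[t+1] a ≠ a := by
  intro a ha ha0 t hcyc
  have hfix0 : ∀ q, p^[q] 0 = 0 := fun q => Function.iterate_fixed A2 q
  have hper : ∀ c, p^[(t+1)*c] a = a := by
    intro c
    induction c with
    | zero => simp
    | succ c ihc =>
      have : (t+1)*(c+1) = (t+1)*c + (t+1) := by ring
      rw [this, Function.iterate_add_apply, hcyc, ihc]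
  have hne0 : ∀ q, p^[q] a ≠ 0 := by
    intro q hq0
    have hq : q ≠ 0 := by
      intro h; rw [h] at hq0; simp at hq0; exact ha0 hq0
    have hge : q ≤ (t+1)*q := Nat.le_mul_of_pos_left q (by omega)
    have : p^[(t+1)*q] a = p^[(t+1)*q - q] (p^[q] a) := by
      rw [← Function.iterate_add_apply]
      congr 1
      omega
    rw [hper q, hq0, hfix0] at this
    exact ha0 this
  have hle : ∀ q, p^[q] a ≤ s := by
    intro q
    induction q with
    | zero => simpa
    | succ q ihq =>
      rw [Function.iterate_succ_apply']
      exact A3 _ ihq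
  have hdec : ∀ q, d (p^[q+1] a) < d (p^[q] a) := by
    intro q
    rw [Function.iterate_succ_apply']
    exact A6 _ (hle q) (hne0 q)
  have hsum : ∀ q, d (p^[q] a) + q ≤ d a := by
    intro q
    induction q with
    | zero => simp
    | succ q ihq =>
      have := hdec q; omega
  have := hsum (t+1)
  rw [hcyc] at this
  omega

set_option maxHeartbeats 2000000 in
/-- With `c₀, c₁` defined recursively along a sequence of blow-ups, and with the
dual graph `G n` after `n` blow-ups evolving as follows — a smooth-point blow-up on `D_j`
creates vertex `n+1` and the edge `{n+1, j}`, a corner blow-up on the intersection point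
`D_j ∩ D_k` creates vertex `n+1`, removes the edge `{j,k}` and adds the edges `{n+1,j}` and
`{n+1,k}` — for any adjacent vertices `i, j` of the final dual graph `G s` the determinant
`c₀ᵢ·c₁ⱼ − c₁ᵢ·c₀ⱼ` is nonzero, and it is negative exactly when the geodesic in the tree
from the root `0` to `i` passes through `j` (equivalently, since the graph is a tree,
every walk from `0` to `i` passes through `j`). -/
theorem stmt_4 (s : ℕ) (c0 c1 : ℕ → ℕ) (G : ℕ → SimpleGraph ℕ)
    (h0 : c0 0 = 1) (h1 : c1 0 = 1) (hG0 : G 0 = ⊥)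
    (hrec : ∀ n, n < s →
      (∃ j, j ≤ n ∧ c0 (n+1) = c0 j ∧ c1 (n+1) = c1 j + 1 ∧
        ∀ a b, (G (n+1)).Adj a b ↔
          (G n).Adj a b ∨ (a = n+1 ∧ b = j) ∨ (a = j ∧ b = n+1)) ∨
      (∃ j k, j ≤ n ∧ k ≤ n ∧ (G n).Adj j k ∧
        c0 (n+1) = c0 j + c0 k ∧ c1 (n+1) = c1 j + c1 k ∧
        ∀ a b, (G (n+1)).Adj a b ↔
          ((G n).Adj a b ∧ ¬(a = j ∧ b = k) ∧ ¬(a = k ∧ b = j)) ∨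
          (a = n+1 ∧ (b = j ∨ b = k)) ∨ ((a = j ∨ a = k) ∧ b = n+1))) :
    ∀ i j, (G s).Adj i j →
      ((c0 i : ℤ) * (c1 j : ℤ) - (c1 i : ℤ) * (c0 j : ℤ) ≠ 0 ∧
       ((c0 i : ℤ) * (c1 j : ℤ) - (c1 i : ℤ) * (c0 j : ℤ) < 0 ↔
          ∀ w : (G s).Walk 0 i, j ∈ w.support)) := by
  have key : ∀ m, m ≤ s → ∃ p d, BlowInv c0 c1 (G m) m p d := by
    intro m
    induction m with
    | zero =>
      intro _
      refine ⟨fun _ => 0, fun _ => 0, ?_, rfl, ?_, ?_, ?_, ?_, ?_, ?_⟩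
      · intro a b hab; rw [hG0] at hab; exact absurd hab (by simp)
      · intro a ha; exact le_rfl
      · intro a ha ha0; omega
      · intro a b hab; rw [hG0] at hab; exact absurd hab (by simp)
      · intro a ha ha0; omega
      · intro a ha ha0; omega
      · intro a ha; interval_cases a; omega
    | succ m ih =>
      intro hm
      obtain ⟨p, d, H⟩ := ih (by omega)
      rcases hrec m (by omega) with ⟨j, hj, hc0, hc1, hG⟩ | ⟨j, k, hj, hk, hadj, hc0, hc1, hG⟩
      · exact smooth_step c0 c1 (G m) (G (m+1)) m j p d H hj hc0 hc1 hG
      · rcases H.2.2.2.2.1 j k hadj with hkj | hjk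
        · -- k = p j : swap roles
          exact corner_step c0 c1 (G m) (G (m+1)) m k j p d H hk hj hadj.symm hkj
            (by omega) (by omega) (by intro a b; rw [hG]; tauto)
        · exact corner_step c0 c1 (G m) (G (m+1)) m j k p d H hj hk hadj hjk hc0 hc1 hG
  obtain ⟨p, d, A1, A2, A3, A4, A5, A6, A7, A8⟩ := key s le_rfl
  intro i j hadj
  have hij : i ≠ j := hadj.ne
  have his : i ≤ s := (A1 i j hadj).1
  have hjs : j ≤ s := (A1 i j hadj).2
  rcases A5 i j hadj with hpi | hpj
  · -- j = p i : determinant negative, every walk 0 → i passes j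
    have hi0 : i ≠ 0 := by
      intro h; apply hij; rw [h] at hpi ⊢; rw [hpi, A2]
    have hdet := A7 i his hi0
    rw [← hpi] at hdet
    refine ⟨ne_of_lt hdet, ⟨fun _ w => ?_, fun _ => hdet⟩⟩
    have hmem := walk_mem_parent (G s) p A2 A5 w.reverse.length i w.reverse le_rfl hi0
    rw [SimpleGraph.Walk.support_reverse, List.mem_reverse, ← hpi] at hmem
    exact hmem
  · -- i = p j : determinant positive, exists walk 0 → i avoiding j
    have hj0 : j ≠ 0 := by
      intro h; apply hij; rw [h] at hpj ⊢; rw [hpj, A2]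
    have hdet := A7 j hjs hj0
    rw [← hpj] at hdet
    have hpos : 0 < (c0 i : ℤ) * (c1 j : ℤ) - (c1 i : ℤ) * (c0 j : ℤ) := by nlinarith
    constructor
    · omega
    constructor
    · intro h; omega
    · intro hall
      exfalso
      obtain ⟨W, hW⟩ := walk_chain (G s) p d s A3 A4 A6 (d i) i his le_rfl
      have hjW := hall W.reverse
      rw [SimpleGraph.Walk.support_reverse, List.mem_reverse] at hjW
      obtain ⟨m, hm⟩ := hW j hjW
      cases m with
      | zero => exact hij (by simpa using hm)
      | succ t =>
        by_cases hi0 : i = 0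
        · rw [hi0, Function.iterate_fixed A2] at hm
          exact hj0 hm.symm
        · apply no_cycle p d s A2 A3 A6 i his hi0 (t+1)
          rw [Function.iterate_succ_apply', hm, ← hpj]
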